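/- Let (A,+) be a cancellative monoid with identity 0, and let X, Y ⊆ A be such that ⟨Y⟩ is commutative and X ∪ (X + Y) ≠ X + ⟨⟨Y⟩⟩. Then |X ∪ (X + Y)| ≥ |X| + min(γ(Y ∪ {0}), |Y| − 1_Y(0)), where 1_Y(0) = 1 if 0 ∈ Y and 0 otherwise. -/

import Mathlib

/-!
Translating by a unit `a ∈ Y₀ = Y ∪ {0}` (replace `X` by `X + a` and `Y₀` by `Y₀ - a`) reduces
the bound to the case `0 ∈ Y`, which is proved by induction on `|Y|` through the Davenport
transform: take `z ∈ X + Y + Y` outside `X + Y` and split `Y` into `Ỹ_z` and its complement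
`Z ∋ 0`. The elements of `z - Ỹ_z` lie in `X + Y` but not in `X + Z`, so
`|X + Y| ≥ |X + Z| + |Ỹ_z|`, and induction applies to `Z` unless `X + Z` is stable under `Z`.
In that case every `y ∈ Z` generates a finite subsemigroup `H`, which is a group because `A` is
cancellative. Writing `v = x + u ∈ (X + Y) \ (X + Z)` with `x ∈ X`, the map `h ↦ x + h` sends
the `h ∈ H` with `x + h ∉ X` into `(X + Z) \ X` and `h ↦ v + h` sends the others into
`(X + Y) \ (X + Z)`, so `|X + Y| ≥ |X| + |H| = |X| + ord y`. Stability of `X + Y₀` itself is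
excluded by the hypothesis: a finite stable `X + Y₀` equals `X + ⟨Y₀⟩`, and the finite
semigroup `⟨Y₀⟩` is `⟨⟨Y⟩⟩`.
-/

open scoped Pointwise Classical
open AddSubsemigroup

namespace CD

variable {A : Type*} [AddSemigroup A]

/-- An element `z` is cancellable if both translation maps are injective. -/
def Cancellable (z : A) : Prop :=
  Function.Injective (fun x : A => x + z) ∧ Function.Injective (fun x : A => z + x)

/-- `e` is a two-sided identity of the semigroup. -/
def IsIdentity (e : A) : Prop := ∀ x : A, x + e = x ∧ e + x = x

/-- `u` is a unit: there is a two-sided identity and a two-sided inverse of `u`. -/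
def IsUnitElem (u : A) : Prop := ∃ e v : A, IsIdentity e ∧ u + v = e ∧ v + u = e

/-- The inverse of a unit (junk value otherwise). -/
noncomputable def neg (u : A) : A :=
  if h : IsUnitElem u then h.choose_spec.choose else u

/-- `ord a` is the cardinality of the subsemigroup generated by `a`. -/
noncomputable def ord (a : A) : ℕ∞ := (closure {a} : Set A).encard

/-- The units of `A` lying in `W`. -/
def unitsIn (W : Set A) : Set A := {w ∈ W | IsUnitElem w}

/-- A set is commutative if its elements pairwise commute. -/
def CommOn (S : Set A) : Prop := ∀ a ∈ S, ∀ b ∈ S, a + b = b + a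

/-- The Cauchy-Davenport constant of a set. -/
noncomputable def gamma (X : Set A) : ℕ∞ :=
  if X.encard ≤ 1 then X.encard
  else ⨆ x₀ ∈ unitsIn X, ⨅ x ∈ {x ∈ X | x ≠ x₀}, ord (x + neg x₀)

/-- The sumset `X 0 + X 1 + ⋯ + X n` of a tuple of sets. -/
def sumsetTup : (n : ℕ) → (Fin (n + 1) → Set A) → Set A
  | 0, X => X 0
  | n + 1, X => sumsetTup n (fun i => X i.castSucc) + X (Fin.last (n + 1))

/-- The sum `x 0 + x 1 + ⋯ + x n` of a tuple of elements. -/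
def sumTup : (n : ℕ) → (Fin (n + 1) → A) → A
  | 0, x => x 0
  | n + 1, x => sumTup n (fun i => x i.castSucc) + x (Fin.last (n + 1))

/-- `nfold n a` is the `(n+1)`-fold sum `a + a + ⋯ + a`. -/
def nfold : ℕ → A → A
  | 0, a => a
  | n + 1, a => nfold n a + a

/-- `⟨⟨W⟩⟩`, the subsemigroup generated by `W` together with the inverses of its units. -/
noncomputable def dclosure (W : Set A) : Set A :=
  (closure (W ∪ neg '' unitsIn W) : Set A)

/-- `Ỹ_z = {y ∈ Y : z ∈ X + Y + y}`. -/
noncomputable def Ytil (X Y : Set A) (z : A) : Set A := {y ∈ Y | z ∈ X + Y + {y}}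

/-- `z − W = {w : z ∈ w + W}`. -/
def subFrom (z : A) (W : Set A) : Set A := {w : A | ∃ u ∈ W, w + u = z}

end CD

open Set

theorem Set.encard_insert_sub_one {α : Type*} (a : α) (s : Set α) :
    (insert a s).encard - 1 = s.encard - if a ∈ s then 1 else 0 := by
  split_ifs with h
  · rw [insert_eq_of_mem h]
  · rw [encard_insert_of_notMem h, tsub_zero,
      (ENat.addLECancellable_of_ne_top ENat.one_ne_top).add_tsub_cancel_right]

namespace CD

section Semigroup

variable {A : Type*} [AddSemigroup A]

theorem CommOn.closure {S : Set A} (h : CommOn S) :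
    CommOn (AddSubsemigroup.closure S : Set A) := by
  have hS : ∀ a ∈ (AddSubsemigroup.closure S : Set A), ∀ b ∈ S, AddCommute a b := by
    intro a ha
    induction ha using AddSubsemigroup.closure_induction with
    | mem x hx => exact h x hx
    | add x y _ _ hx hy => exact fun b hb => (hx b hb).add_left (hy b hb)
  intro a ha b hb
  induction hb using AddSubsemigroup.closure_induction with
  | mem x hx => exact hS a ha x hx
  | add x y _ _ hx hy => exact AddCommute.add_right hx hy

theorem add_closure_subset {S Z : Set A} (h : S + Z ⊆ S) : S + (closure Z : Set A) ⊆ S := by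
  rintro _ ⟨s, hs, g, hg, rfl⟩
  induction hg using closure_induction generalizing s with
  | mem z hz => exact h (add_mem_add hs hz)
  | add a b _ _ ha hb => simpa only [add_assoc] using hb _ (ha s hs)

theorem disjoint_add_diff_Ytil_subFrom {X Y : Set A} (hcomm : CommOn Y) (z : A) :
    Disjoint (X + (Y \ Ytil X Y z)) (subFrom z (Ytil X Y z)) := by
  rw [disjoint_left]
  rintro _ ⟨x, hx, t, ⟨htY, ht⟩, rfl⟩ ⟨u, ⟨huY, -⟩, hu⟩
  refine ht ⟨htY, x + u, add_mem_add hx huY, t, rfl, ?_⟩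
  beta_reduce at hu ⊢
  rw [← hu, add_assoc, add_assoc, hcomm u huY t htY]

theorem singleton_add_eq_add_singleton {a : A} {Y : Set A} (h : ∀ y ∈ Y, a + y = y + a) :
    {a} + Y = Y + {a} := by
  rw [singleton_add, add_singleton]
  exact image_congr h

end Semigroup

section CancelSemigroup

variable {A : Type*} [AddSemigroup A] [IsCancelAdd A]

theorem subFrom_Ytil_subset (X Y : Set A) (z : A) : subFrom z (Ytil X Y z) ⊆ X + Y := by
  rintro w ⟨u, ⟨-, p, hp, _, rfl, hpu⟩, hwu⟩
  rwa [add_right_cancel (hwu.trans hpu.symm)]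

theorem encard_le_encard_subFrom {W : Set A} {z : A} (h : ∀ u ∈ W, ∃ w, w + u = z) :
    W.encard ≤ (subFrom z W).encard := by
  choose! f hf using h
  refine encard_le_encard_of_injOn (fun u hu => ⟨u, hu, hf u hu⟩) fun u hu u' hu' huu => ?_
  have h := (hf u hu).trans (hf u' hu').symm
  rw [huu] at h
  exact add_left_cancel h

theorem encard_add_diff_Ytil_add_encard_Ytil_le {X Y : Set A} (hcomm : CommOn Y) (z : A) :
    (X + (Y \ Ytil X Y z)).encard + (Ytil X Y z).encard ≤ (X + Y).encard := by
  have hYt : (Ytil X Y z).encard ≤ (subFrom z (Ytil X Y z)).encard :=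
    encard_le_encard_subFrom fun u ⟨_, p, _, _, hq, hpu⟩ => ⟨p, hq ▸ hpu⟩
  calc _ ≤ (X + (Y \ Ytil X Y z)).encard + (subFrom z (Ytil X Y z)).encard := by gcongr
    _ = (X + (Y \ Ytil X Y z) ∪ subFrom z (Ytil X Y z)).encard :=
        (encard_union_eq (disjoint_add_diff_Ytil_subFrom hcomm z)).symm
    _ ≤ (X + Y).encard :=
        encard_le_encard <|
          union_subset (add_subset_add_left sdiff_subset) (subFrom_Ytil_subset X Y z)

theorem finite_of_finite_add_left {X T : Set A} (hX : X.Nonempty) (h : (X + T).Finite) :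
    T.Finite := by
  obtain ⟨x, hx⟩ := hX
  refine Finite.of_finite_image (h.subset ?_) (add_right_injective x).injOn
  rintro _ ⟨t, ht, rfl⟩
  exact add_mem_add hx ht

end CancelSemigroup

section Monoid

variable {A : Type*} [AddMonoid A]

theorem CommOn.insert_zero {S : Set A} (h : CommOn S) : CommOn (insert 0 S) := by
  rintro a (rfl | ha) b (rfl | hb)
  · rfl
  · exact AddCommute.zero_left b
  · exact AddCommute.zero_right a
  · exact h a ha b hb

theorem union_add_eq_add_insert_zero (X Y : Set A) : X ∪ (X + Y) = X + insert 0 Y := by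
  rw [insert_eq, add_union, singleton_zero, add_zero]

theorem isIdentity_zero : IsIdentity (0 : A) := fun x => ⟨add_zero x, zero_add x⟩

theorem IsIdentity.eq_zero {e : A} (h : IsIdentity e) : e = 0 := by
  simpa using (h 0).1

theorem isUnitElem_zero : IsUnitElem (0 : A) :=
  ⟨0, 0, isIdentity_zero, add_zero 0, add_zero 0⟩

theorem add_neg_of_isUnitElem {u : A} (hu : IsUnitElem u) : u + neg u = 0 := by
  rw [neg, dif_pos hu]
  obtain ⟨he, h, -⟩ := hu.choose_spec.choose_spec
  exact he.eq_zero ▸ h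

theorem exists_gamma_le {W : Set A} (hW : W.Finite) (h0 : (0 : A) ∈ W) :
    ∃ a ∈ W, IsUnitElem a ∧ gamma W ≤ ⨅ x ∈ {x ∈ W | x ≠ a}, ord (x + neg a) := by
  obtain ⟨a, ⟨ha, hau⟩, hmax⟩ := exists_max_image (unitsIn W)
    (fun a => ⨅ x ∈ {x ∈ W | x ≠ a}, ord (x + neg a)) (hW.subset (sep_subset _ _))
    ⟨0, h0, isUnitElem_zero⟩
  refine ⟨a, ha, hau, ?_⟩
  unfold gamma
  split_ifs with h
  · exact le_iInf₂ fun x hx => absurd (encard_le_one_iff.1 h x a hx.1 ha) hx.2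
  · exact iSup₂_le hmax

end Monoid

section CancelMonoid

variable {A : Type*} [AddMonoid A] [IsCancelAdd A]

theorem neg_eq_of_add_eq_zero {u b : A} (h : b + u = 0) : neg u = b := by
  have hu : IsUnitElem u := ⟨0, b, isIdentity_zero, add_eq_zero_symm h, h⟩
  rw [neg, dif_pos hu]
  obtain ⟨he, -, h'⟩ := hu.choose_spec.choose_spec
  exact add_right_cancel (h'.trans (he.eq_zero.trans h.symm))

theorem exists_add_eq_zero_of_finite {S : AddSubsemigroup A} (hS : (S : Set A).Finite) {a : A}
    (ha : a ∈ S) : ∃ b ∈ S, b + a = 0 := by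
  have hmaps : MapsTo (· + a) (S : Set A) S := fun s hs => S.add_mem hs ha
  have hsurj := ((hS.injOn_iff_bijOn_of_mapsTo hmaps).1 (add_left_injective a).injOn).surjOn
  obtain ⟨e, he, hea⟩ := hsurj ha
  obtain rfl : e = 0 := by simpa using hea
  exact hsurj he

theorem exists_davenport_transform {X Y : Set A} (h0 : (0 : A) ∈ Y) (hcomm : CommOn Y)
    (hstab : ¬ X + Y + Y ⊆ X + Y) :
    ∃ Z ⊂ Y, 0 ∈ Z ∧ (X + Z).encard + (Y \ Z).encard ≤ (X + Y).encard ∧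
      ∃ v ∈ X + Y, v ∉ X + Z := by
  obtain ⟨_, ⟨v, hv, y, hy, rfl⟩, hz⟩ := not_subset.1 hstab
  beta_reduce at hz
  have hyt : y ∈ Ytil X Y (v + y) := ⟨hy, add_mem_add hv rfl⟩
  refine ⟨Y \ Ytil X Y (v + y), sdiff_ssubset_left_iff.2 ⟨y, hy, hyt⟩, ⟨h0, fun h => hz ?_⟩, ?_,
    v, hv, fun hv' => ?_⟩
  · simpa using h.2
  · rw [sdiff_sdiff_cancel_left (show Ytil X Y (v + y) ⊆ Y from sep_subset _ _)]
    exact encard_add_diff_Ytil_add_encard_Ytil_le hcomm _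
  · exact disjoint_left.1 (disjoint_add_diff_Ytil_subFrom hcomm _) hv' ⟨y, hyt, rfl⟩

theorem encard_add_ord_le_of_add_subset {X Y Z : Set A} (hZY : Z ⊆ Y) (h0 : (0 : A) ∈ Z)
    (hcomm : CommOn Y) (hfin : (X + Z).Finite) (hstab : X + Z + Z ⊆ X + Z) {y v : A}
    (hy : y ∈ Z) (hvY : v ∈ X + Y) (hvZ : v ∉ X + Z) :
    X.encard + ord y ≤ (X + Y).encard := by
  obtain ⟨x, hx, u, hu, rfl⟩ := hvY
  beta_reduce at hvZ ⊢
  set H : Set A := closure {y}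
  have hHZ : H ⊆ closure Z := closure_mono (singleton_subset_iff.2 hy)
  have hXZ : X ⊆ X + Z := subset_add_left X h0
  have habs : ∀ s ∈ X + Z, ∀ h ∈ H, s + h ∈ X + Z := fun s hs h hh =>
    add_closure_subset hstab (add_mem_add hs (hHZ hh))
  have hHfin : H.Finite := finite_of_finite_add_left ⟨x, hx⟩ <| hfin.subset <| by
    rintro _ ⟨x', hx', h, hh, rfl⟩
    exact habs x' (hXZ hx') h hh
  set D : Set A := {h ∈ H | x + h ∈ X}
  have hHD : (H \ D).encard ≤ ((X + Z) \ X).encard :=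
    encard_le_encard_of_injOn (f := (x + ·))
      (fun h ⟨hh, hD⟩ => ⟨habs x (hXZ hx) h hh, fun hX => hD ⟨hh, hX⟩⟩)
      (add_right_injective x).injOn
  have hD : D.encard ≤ ((X + Y) \ (X + Z)).encard := by
    refine encard_le_encard_of_injOn (f := (x + u + ·))
      (fun h ⟨hh, hX⟩ => ⟨?_, fun hZ => hvZ ?_⟩) (add_right_injective _).injOn
    · have hcomm' : u + h = h + u :=
        hcomm.closure u (subset_closure hu) h (closure_mono hZY (hHZ hh))
      show x + u + h ∈ X + Y
      rw [add_assoc, hcomm', ← add_assoc]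
      exact add_mem_add hX hu
    · obtain ⟨h', hh', hh'0⟩ := exists_add_eq_zero_of_finite hHfin hh
      simpa [add_assoc, add_eq_zero_symm hh'0] using habs _ hZ h' hh'
  calc X.encard + ord y = X.encard + ((H \ D).encard + D.encard) := by
        rw [encard_sdiff_add_encard_of_subset (sep_subset _ _)]; rfl
    _ ≤ X.encard + (((X + Z) \ X).encard + ((X + Y) \ (X + Z)).encard) := by gcongr
    _ = (X + Y).encard := by
        rw [← add_assoc, add_comm X.encard, encard_sdiff_add_encard_of_subset hXZ, add_comm,
          encard_sdiff_add_encard_of_subset (add_subset_add_left hZY)]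

theorem cauchy_davenport_of_zero_mem {X Y : Set A} (hX : X.Finite) (hY : Y.Finite)
    (h0 : (0 : A) ∈ Y) (hcomm : CommOn Y) (hstab : ¬ X + Y + Y ⊆ X + Y) :
    X.encard + min (⨅ y ∈ {y ∈ Y | y ≠ 0}, ord y) (Y.encard - 1) ≤ (X + Y).encard := by
  induction hn : Y.ncard using Nat.strong_induction_on generalizing Y with
  | _ n IH => ?_
  obtain ⟨Z, hZY, h0Z, hcount, v, hvY, hvZ⟩ := exists_davenport_transform h0 hcomm hstab
  have hZ : Z.Finite := hY.subset hZY.subset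
  have hcommZ : CommOn Z := fun a ha b hb => hcomm a (hZY.subset ha) b (hZY.subset hb)
  have hreduce :
      X.encard + min (⨅ y ∈ {y ∈ Z | y ≠ 0}, ord y) (Z.encard - 1) ≤ (X + Z).encard →
      X.encard + min (⨅ y ∈ {y ∈ Y | y ≠ 0}, ord y) (Y.encard - 1) ≤ (X + Y).encard := by
    intro hXZ
    have hord : ⨅ y ∈ {y ∈ Y | y ≠ 0}, ord y ≤ ⨅ y ∈ {y ∈ Z | y ≠ 0}, ord y :=
      biInf_mono fun y hy => ⟨hZY.subset hy.1, hy.2⟩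
    calc X.encard + min (⨅ y ∈ {y ∈ Y | y ≠ 0}, ord y) (Y.encard - 1)
        ≤ X.encard + (min (⨅ y ∈ {y ∈ Z | y ≠ 0}, ord y) (Z.encard - 1) + (Y \ Z).encard) := by
          gcongr
          rw [← min_add_add_right, ← encard_sdiff_add_encard_of_subset hZY.subset, add_comm]
          exact min_le_min (hord.trans le_self_add) add_tsub_le_tsub_add
      _ ≤ (X + Z).encard + (Y \ Z).encard := by rw [← add_assoc]; gcongr
      _ ≤ (X + Y).encard := hcount
  by_cases hstabZ : X + Z + Z ⊆ X + Z
  · by_cases hy : ∃ y ∈ Z, y ≠ 0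
    · obtain ⟨y, hyZ, hy0⟩ := hy
      calc X.encard + min (⨅ y ∈ {y ∈ Y | y ≠ 0}, ord y) (Y.encard - 1) ≤ X.encard + ord y := by
            gcongr
            exact (min_le_left _ _).trans (biInf_le _ ⟨hZY.subset hyZ, hy0⟩)
        _ ≤ (X + Y).encard := encard_add_ord_le_of_add_subset hZY.subset h0Z hcomm
            (hX.add hZ) hstabZ hyZ hvY hvZ
    · push Not at hy
      obtain rfl : Z = {0} := eq_singleton_iff_unique_mem.2 ⟨h0Z, hy⟩
      exact hreduce (by simp)
  · exact hreduce (IH _ (hn ▸ ncard_lt_ncard hZY hY) hZ h0Z hcommZ hstabZ rfl)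

theorem add_singleton_eq_of_subset {S : Set A} {c : A} (hS : S.Finite) (h : S + {c} ⊆ S) :
    S + {c} = S :=
  (hS.add (finite_singleton c)).eq_of_subset_of_encard_le h
    (by rw [add_singleton, (add_left_injective c).injOn.encard_image])

theorem add_subset_of_add_add_singleton_subset {S Y : Set A} {a c : A} (hS : S.Finite)
    (h0 : (0 : A) ∈ Y) (hca : c + a = 0) (h : S + (Y + {c}) ⊆ S) : S + Y ⊆ S := by
  have hc : S + {c} = S := by
    refine add_singleton_eq_of_subset hS (Subset.trans (add_subset_add_left ?_) h)
    simpa using add_mem_add h0 (mem_singleton c)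
  have hY : Y = Y + {c} + {a} := by
    rw [add_assoc, singleton_add_singleton, hca, singleton_zero, add_zero]
  calc S + Y = S + (Y + {c}) + {a} := by
        conv_lhs => rw [hY]
        simp only [add_assoc]
    _ ⊆ S + {a} := add_subset_add_right h
    _ = S := by rw [← hc, add_assoc, singleton_add_singleton, hca, singleton_zero, add_zero, hc]

theorem cauchy_davenport_of_mem {X Y : Set A} (hX : X.Finite) (hY : Y.Finite)
    (h0 : (0 : A) ∈ Y) (hcomm : CommOn Y) (hstab : ¬ X + Y + Y ⊆ X + Y) {a c : A} (ha : a ∈ Y)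
    (hac : a + c = 0) :
    X.encard + min (⨅ y ∈ {y ∈ Y | y ≠ a}, ord (y + c)) (Y.encard - 1) ≤ (X + Y).encard := by
  have hca : c + a = 0 := add_eq_zero_symm hac
  have hcY : ∀ y ∈ Y, AddCommute c y := fun y hy =>
    AddCommute.addUnits_neg_left (u := ⟨a, c, hac, hca⟩) (hcomm a ha y hy)
  have hXY : X + {a} + (Y + {c}) = X + Y := by
    rw [add_assoc, ← add_assoc ({a} : Set A), singleton_add_eq_add_singleton (hcomm a ha),
      add_assoc Y, singleton_add_singleton, hac, singleton_zero, add_zero]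
  have h0' : (0 : A) ∈ Y + {c} := ⟨a, ha, c, rfl, hac⟩
  have hcomm' : CommOn (Y + {c}) := by
    rw [add_singleton]
    rintro _ ⟨s, hs, rfl⟩ _ ⟨t, ht, rfl⟩
    exact (AddCommute.add_right (hcomm s hs t ht) (hcY s hs).symm).add_left
      ((hcY t ht).add_right (AddCommute.refl c))
  have hstab' : ¬ X + {a} + (Y + {c}) + (Y + {c}) ⊆ X + {a} + (Y + {c}) := by
    rw [hXY]
    exact fun h => hstab (add_subset_of_add_add_singleton_subset (hX.add hY) h0 hca h)
  have hcore := cauchy_davenport_of_zero_mem (hX.add (finite_singleton a))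
    (hY.add (finite_singleton c)) h0' hcomm' hstab'
  have hpunct : {y ∈ Y + {c} | y ≠ 0} = (· + c) '' {y ∈ Y | y ≠ a} := by
    ext w
    rw [add_singleton]
    constructor
    · rintro ⟨⟨y, hy, rfl⟩, hw⟩
      exact ⟨y, ⟨hy, fun h => hw (h ▸ hac)⟩, rfl⟩
    · rintro ⟨y, ⟨hy, hya⟩, rfl⟩
      exact ⟨⟨y, hy, rfl⟩, fun h => hya (add_right_cancel (h.trans hac.symm))⟩
  rwa [hXY, hpunct, iInf_image, add_singleton, add_singleton,
    (add_left_injective a).injOn.encard_image, (add_left_injective c).injOn.encard_image] at hcore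

theorem add_insert_zero_eq_add_dclosure {X Y : Set A} (hX : X.Nonempty) (hY : Y.Nonempty)
    (hfin : (X + insert 0 Y).Finite) (hstab : X + insert 0 Y + insert 0 Y ⊆ X + insert 0 Y) :
    X + insert 0 Y = X + dclosure Y := by
  set G := closure (insert 0 Y)
  have hXG : X + (G : Set A) ⊆ X + insert 0 Y :=
    (add_subset_add_right (subset_add_left X (mem_insert 0 Y))).trans (add_closure_subset hstab)
  have hGfin : (G : Set A).Finite := finite_of_finite_add_left hX (hfin.subset hXG)
  have hdcl : closure (Y ∪ neg '' unitsIn Y) = G := by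
    apply le_antisymm
    · refine closure_le.2 (union_subset ((subset_insert 0 Y).trans subset_closure) ?_)
      rintro _ ⟨u, ⟨hu, -⟩, rfl⟩
      obtain ⟨b, hb, hbu⟩ :=
        exists_add_eq_zero_of_finite hGfin (subset_closure (mem_insert_of_mem 0 hu))
      rwa [neg_eq_of_add_eq_zero hbu]
    · obtain ⟨y, hy⟩ := hY
      have hYG : closure Y ≤ G := closure_mono (subset_insert 0 Y)
      obtain ⟨b, hb, hby⟩ := exists_add_eq_zero_of_finite (hGfin.subset hYG) (subset_closure hy)
      refine closure_le.2 (insert_subset ?_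
        (subset_union_left.trans AddSubsemigroup.subset_closure))
      exact closure_mono subset_union_left (hby ▸ add_mem hb (subset_closure hy))
  rw [dclosure, hdcl]
  exact (add_subset_add_left AddSubsemigroup.subset_closure).antisymm hXG

end CancelMonoid

end CD

open CD

theorem stmt14 {A : Type*} [AddMonoid A] [IsCancelAdd A] (X Y : Set A)
    (hcomm : CommOn (AddSubsemigroup.closure Y : Set A))
    (hne : X ∪ (X + Y) ≠ X + dclosure Y) :
    X.encard + min (gamma (Y ∪ {0})) (Y.encard - (if (0 : A) ∈ Y then 1 else 0)) ≤
      (X ∪ (X + Y)).encard := by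
  rcases X.eq_empty_or_nonempty with rfl | hX
  · simp at hne
  rcases Y.eq_empty_or_nonempty with rfl | hY
  · simp
  rw [union_singleton, ← encard_insert_sub_one]
  rw [union_add_eq_add_insert_zero] at hne ⊢
  by_cases hfin : (X + insert 0 Y).Finite
  swap
  · simp [Infinite.encard_eq hfin]
  have hstab : ¬ X + insert 0 Y + insert 0 Y ⊆ X + insert 0 Y := fun h =>
    hne (add_insert_zero_eq_add_dclosure hX hY hfin h)
  have hY₀ : (insert 0 Y).Finite := finite_of_finite_add_left hX hfin
  have hcomm₀ : CommOn (insert 0 Y) := CommOn.insert_zero fun a ha b hb =>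
    hcomm a (AddSubsemigroup.subset_closure ha) b (AddSubsemigroup.subset_closure hb)
  obtain ⟨a, ha, hau, hγ⟩ := exists_gamma_le hY₀ (mem_insert 0 Y)
  calc _ ≤ X.encard + min (⨅ x ∈ {x ∈ insert 0 Y | x ≠ a}, ord (x + neg a))
        ((insert 0 Y).encard - 1) := by gcongr
    _ ≤ _ := cauchy_davenport_of_mem (hfin.subset (subset_add_left X (mem_insert 0 Y))) hY₀
        (mem_insert 0 Y) hcomm₀ hstab ha (add_neg_of_isUnitElem hau)
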